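/- Let G₁ and G₂ be finite simple graphs on N₁ and N₂ vertices respectively, and suppose that for i = 1, 2 the cone over G_i admits a swift chiral quantum walk starting from its apex, i.e. there exists a chiral adjacency matrix H_i on the cone over G_i whose apex return probability equals cos²(√N_i · t) for all t ≥ 0. Then the cone over the disjoint union G₁ ⊔ G₂ admits a swift chiral quantum walk starting from its apex: there exists a chiral adjacency matrix H on the cone over G₁ ⊔ G₂ whose apex return probability equals cos²(√(N₁+N₂) · t) for all t ≥ 0. -/

import Mathlib

/-!
For Hermitian `H` with `H v v = 0` and `N ≥ 0`, swiftness from `v` is equivalent to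
`H² eᵥ = N eᵥ`. The return amplitude `f(z) = exp(-izH) v v` is entire and
`f(-t) = conj (f t)` for real `t`, so the hypothesis says
`f(t) f(-t) = cos(√N t) cos(-√N t)` on the real line. Comparing second and fourth
derivatives at `0` gives `(H²) v v = N` and `(H⁴) v v = ∑ₓ |(H²) x v|² = N²`, so the
off-diagonal entries of the column `H² eᵥ` vanish. Conversely, `H² eᵥ = N eᵥ` makes the
Taylor coefficients of `f` those of `cos(√N z)`. Identifying the apexes of two cones adds
the columns `H₁² e_apex` and `H₂² e_apex`, which gives `(N₁ + N₂) e_apex`.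
-/

open Matrix

/-- The cone over a graph `G`: one new vertex (the apex, `none`) adjacent to every
vertex of `G`. -/
def coneGraph {V : Type*} (G : SimpleGraph V) : SimpleGraph (Option V) where
  Adj x y :=
    match x, y with
    | none, none => False
    | none, some _ => True
    | some _, none => True
    | some a, some b => G.Adj a b
  symm := by
    constructor
    rintro (_ | a) (_ | b) h
    · exact h
    · exact trivial
    · exact trivial
    · exact G.adj_symm h
  loopless := by
    constructor
    rintro (_ | a) h
    · exact h
    · exact G.loopless.irrefl a h

/-- A chiral adjacency matrix on a simple graph `G`: a Hermitian matrix whose entries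
have modulus one on edges of `G` and vanish elsewhere. -/
def IsChiralAdjacency {V : Type*} (G : SimpleGraph V) (A : Matrix V V ℂ) : Prop :=
  A.IsHermitian ∧ (∀ j k, G.Adj j k → ‖A j k‖ = 1) ∧
    ∀ j k, ¬ G.Adj j k → A j k = 0

open NormedSpace

lemma iteratedDeriv_comp_ofReal {f : ℂ → ℂ} (hf : Differentiable ℂ f) (n : ℕ) :
    iteratedDeriv n (fun t : ℝ => f t) = fun t : ℝ => iteratedDeriv n f t := by
  induction n with
  | zero => simp
  | succ n ih =>
    rw [iteratedDeriv_succ, ih, iteratedDeriv_succ]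
    funext t
    exact ((hf.contDiff (n := ⊤)).differentiable_iteratedDeriv n (by simp)
      |>.differentiableAt.hasDerivAt.comp_ofReal).deriv

lemma Differentiable.eq_of_iteratedDeriv_zero_eq {f g : ℂ → ℂ} (hf : Differentiable ℂ f)
    (hg : Differentiable ℂ g) (h : ∀ n, iteratedDeriv n f 0 = iteratedDeriv n g 0) : f = g := by
  funext z
  rw [← Complex.taylorSeries_eq_of_entire' (c := 0) (z := z) hf,
    ← Complex.taylorSeries_eq_of_entire' (c := 0) (z := z) hg]
  simp only [h]

lemma iteratedDeriv_mul_comp_neg_zero {f : ℂ → ℂ} (hf : Differentiable ℂ f) (n : ℕ) :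
    iteratedDeriv n (fun z => f z * f (-z)) 0 = ∑ i ∈ Finset.range (n + 1),
      n.choose i * (-1) ^ (n - i) * iteratedDeriv i f 0 * iteratedDeriv (n - i) f 0 := by
  have hf' : ContDiff ℂ ⊤ f := hf.contDiff
  have hg : ContDiff ℂ ⊤ (fun z => f (-z)) := hf'.comp contDiff_neg
  rw [iteratedDeriv_fun_mul (hf'.contDiffAt.of_le (by simp)) (hg.contDiffAt.of_le (by simp))]
  refine Finset.sum_congr rfl fun i _ => ?_
  rw [iteratedDeriv_comp_neg, neg_zero, smul_eq_mul]
  ring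

lemma iteratedDeriv_two_mul_comp_neg_zero {f : ℂ → ℂ} (hf : Differentiable ℂ f) :
    iteratedDeriv 2 (fun z => f z * f (-z)) 0 =
      2 * f 0 * iteratedDeriv 2 f 0 - 2 * deriv f 0 ^ 2 := by
  simp [iteratedDeriv_mul_comp_neg_zero hf, Finset.sum_range_succ]
  ring

lemma iteratedDeriv_four_mul_comp_neg_zero {f : ℂ → ℂ} (hf : Differentiable ℂ f) :
    iteratedDeriv 4 (fun z => f z * f (-z)) 0 = 2 * f 0 * iteratedDeriv 4 f 0 -
      8 * deriv f 0 * iteratedDeriv 3 f 0 + 6 * iteratedDeriv 2 f 0 ^ 2 := by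
  simp [iteratedDeriv_mul_comp_neg_zero hf, Finset.sum_range_succ, Nat.choose]
  ring

lemma iteratedDeriv_cos_mul_even_zero (a : ℂ) (k : ℕ) :
    iteratedDeriv (2 * k) (fun z => Complex.cos (a * z)) 0 = (-a ^ 2) ^ k := by
  rw [iteratedDeriv_comp_const_mul Complex.contDiff_cos, Complex.iteratedDeriv_even_cos]
  simp only [mul_zero, Pi.mul_apply, Pi.pow_apply, Pi.neg_apply, Pi.one_apply, Complex.cos_zero,
    mul_one]
  rw [pow_mul, neg_pow (a ^ 2), mul_comm]

lemma iteratedDeriv_cos_mul_odd_zero (a : ℂ) (k : ℕ) :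
    iteratedDeriv (2 * k + 1) (fun z => Complex.cos (a * z)) 0 = 0 := by
  simp [iteratedDeriv_comp_const_mul Complex.contDiff_cos]

section
variable {V : Type*} [Fintype V] [DecidableEq V]

lemma hasDerivAt_pow_mul_exp_smul_apply (A : Matrix V V ℂ) (i j : V) (n : ℕ) (z : ℂ) :
    HasDerivAt (fun w : ℂ => (A ^ n * exp (w • A)) i j)
      ((A ^ (n + 1) * exp (z • A)) i j) z := by
  let _ := Matrix.linftyOpNormedRing (n := V) (α := ℂ)
  let _ := Matrix.linftyOpNormedAlgebra (n := V) (α := ℂ) (R := ℂ)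
  let entry : Matrix V V ℂ →L[ℂ] ℂ := (entryLinearMap ℂ ℂ i j).toContinuousLinearMap
  have := entry.hasFDerivAt.comp_hasDerivAt z ((hasDerivAt_exp_smul_const' A z).const_mul (A ^ n))
  rw [show (A ^ (n + 1) * exp (z • A)) i j = entry (A ^ n * (A * exp (z • A))) by
    simp [entry, pow_succ, mul_assoc]]
  exact this

lemma iteratedDeriv_exp_smul_apply (A : Matrix V V ℂ) (i j : V) (n : ℕ) :
    iteratedDeriv n (fun z : ℂ => exp (z • A) i j) = fun z => (A ^ n * exp (z • A)) i j := by
  induction n with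
  | zero => simp
  | succ n ih =>
    rw [iteratedDeriv_succ, ih]
    exact funext fun z => (hasDerivAt_pow_mul_exp_smul_apply A i j n z).deriv

lemma iteratedDeriv_exp_smul_apply_zero (A : Matrix V V ℂ) (i j : V) (n : ℕ) :
    iteratedDeriv n (fun z : ℂ => exp (z • A) i j) 0 = (A ^ n) i j := by
  simp [iteratedDeriv_exp_smul_apply]

lemma differentiable_exp_smul_apply (A : Matrix V V ℂ) (i j : V) :
    Differentiable ℂ (fun z : ℂ => exp (z • A) i j) := fun z => by
  simpa using (hasDerivAt_pow_mul_exp_smul_apply A i j 0 z).differentiableAt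

/-- At real `t` this is the return amplitude `exp(-itH) v v`; allowing complex time makes it an
entire function, so that it is determined by its Taylor coefficients at `0`. -/
noncomputable def returnAmplitude (H : Matrix V V ℂ) (v : V) (z : ℂ) : ℂ :=
  exp (z • (-Complex.I • H)) v v

lemma returnAmplitude_ofReal (H : Matrix V V ℂ) (v : V) (t : ℝ) :
    returnAmplitude H v t = exp ((-(t : ℂ) * Complex.I) • H) v v := by
  rw [returnAmplitude, smul_smul, mul_neg, neg_mul]

lemma differentiable_returnAmplitude (H : Matrix V V ℂ) (v : V) :
    Differentiable ℂ (returnAmplitude H v) :=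
  differentiable_exp_smul_apply _ v v

lemma iteratedDeriv_returnAmplitude_zero (H : Matrix V V ℂ) (v : V) (n : ℕ) :
    iteratedDeriv n (returnAmplitude H v) 0 = (-Complex.I) ^ n * (H ^ n) v v := by
  rw [← smul_eq_mul, ← Matrix.smul_apply, ← smul_pow]
  exact iteratedDeriv_exp_smul_apply_zero _ v v n

lemma returnAmplitude_neg_ofReal {H : Matrix V V ℂ} (hH : H.IsHermitian) (v : V) (t : ℝ) :
    returnAmplitude H v (-t) = starRingEnd ℂ (returnAmplitude H v t) := by
  have : (-t : ℂ) • (-Complex.I • H) = ((t : ℂ) • (-Complex.I • H))ᴴ := by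
    rw [conjTranspose_smul, conjTranspose_smul, hH.eq, Complex.star_def,
      Complex.conj_ofReal, map_neg, Complex.conj_I, smul_smul, smul_smul]
    ring_nf
  rw [returnAmplitude, this, exp_conjTranspose, conjTranspose_apply]
  rfl

end

lemma Matrix.IsHermitian.apply_eq_zero_of_mul_self_apply_self {V : Type*} [Fintype V]
    [DecidableEq V]
    {P : Matrix V V ℂ} (hP : P.IsHermitian) {v : V} {c : ℝ} (h₁ : P v v = c)
    (h₂ : (P * P) v v = (c : ℂ) ^ 2) {x : V} (hx : x ≠ v) : P x v = 0 := by
  -- the column sum `∑ y, ‖P y v‖ ^ 2` is `c ^ 2`, and its `v`-term alone is already `c ^ 2`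
  have hsum : ∑ y, ‖P y v‖ ^ 2 = c ^ 2 := by
    have : (P * P) v v = ∑ y, ((‖P y v‖ ^ 2 : ℝ) : ℂ) := by
      rw [mul_apply]
      refine Finset.sum_congr rfl fun y _ => ?_
      rw [← hP.apply v y, Complex.ofReal_pow, Complex.star_def, Complex.conj_mul']
    exact_mod_cast this.symm.trans h₂
  rw [← Finset.add_sum_erase _ _ (Finset.mem_univ v), h₁, Complex.norm_real, Real.norm_eq_abs,
    sq_abs, add_eq_left] at hsum
  have := (Finset.sum_eq_zero_iff_of_nonneg (fun _ _ => by positivity)).mp hsum x (by simp [hx])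
  simpa using this

section
variable {V : Type*} [Fintype V] [DecidableEq V]

def IsSwift (H : Matrix V V ℂ) (v : V) (N : ℝ) : Prop :=
  ∀ t : ℝ, 0 ≤ t →
    ‖exp ((-(t : ℂ) * Complex.I) • H) v v‖ ^ 2 = Real.cos (Real.sqrt N * t) ^ 2

variable {H : Matrix V V ℂ} {v : V} {N : ℝ}

lemma IsSwift.returnAmplitude_mul_neg (hH : H.IsHermitian) (hs : IsSwift H v N) (t : ℝ) :
    returnAmplitude H v t * returnAmplitude H v (-t) =
      Complex.cos (Real.sqrt N * t) * Complex.cos (Real.sqrt N * -t) := by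
  have key : ∀ t : ℝ, 0 ≤ t → returnAmplitude H v t * returnAmplitude H v (-t) =
      Complex.cos (Real.sqrt N * t) * Complex.cos (Real.sqrt N * -t) := by
    intro t ht
    rw [returnAmplitude_neg_ofReal hH, Complex.mul_conj, Complex.normSq_eq_norm_sq,
      returnAmplitude_ofReal, hs t ht, mul_neg, Complex.cos_neg, ← sq]
    push_cast
    rfl
  rcases le_total 0 t with ht | ht
  · exact key t ht
  · have := key (-t) (neg_nonneg.mpr ht)
    rwa [Complex.ofReal_neg, neg_neg, mul_comm, mul_comm (Complex.cos _)] at this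

lemma IsSwift.iteratedDeriv_returnAmplitude_mul_neg (hH : H.IsHermitian) (hs : IsSwift H v N)
    (n : ℕ) :
    iteratedDeriv n (fun z => returnAmplitude H v z * returnAmplitude H v (-z)) 0 =
      iteratedDeriv n
        (fun z => Complex.cos (Real.sqrt N * z) * Complex.cos (Real.sqrt N * -z)) 0 := by
  have hf := differentiable_returnAmplitude H v
  have hc : Differentiable ℂ fun z : ℂ => Complex.cos (Real.sqrt N * z) :=
    Complex.differentiable_cos.comp (differentiable_id.const_mul _)
  have h₁ := congrFun (iteratedDeriv_comp_ofReal
    (f := fun z => returnAmplitude H v z * returnAmplitude H v (-z))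
    (hf.mul (hf.comp differentiable_neg)) n) 0
  have h₂ := congrFun (iteratedDeriv_comp_ofReal
    (f := fun z => Complex.cos (Real.sqrt N * z) * Complex.cos (Real.sqrt N * -z))
    (hc.mul (hc.comp differentiable_neg)) n) 0
  rw [Complex.ofReal_zero] at h₁ h₂
  rw [← h₁, ← h₂, funext (hs.returnAmplitude_mul_neg hH)]

lemma IsSwift.sq_apply_self_and_pow_four_apply_self (hH : H.IsHermitian) (hv : H v v = 0)
    (hN : 0 ≤ N) (hs : IsSwift H v N) : (H ^ 2) v v = N ∧ (H ^ 4) v v = N ^ 2 := by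
  have hf := differentiable_returnAmplitude H v
  have hc : Differentiable ℂ fun z : ℂ => Complex.cos (Real.sqrt N * z) :=
    Complex.differentiable_cos.comp (differentiable_id.const_mul _)
  have hd₂ := hs.iteratedDeriv_returnAmplitude_mul_neg hH 2
  have hd₄ := hs.iteratedDeriv_returnAmplitude_mul_neg hH 4
  rw [iteratedDeriv_two_mul_comp_neg_zero hf, iteratedDeriv_two_mul_comp_neg_zero hc] at hd₂
  rw [iteratedDeriv_four_mul_comp_neg_zero hf, iteratedDeriv_four_mul_comp_neg_zero hc] at hd₄
  have ha : ((Real.sqrt N : ℝ) : ℂ) ^ 2 = N := by rw [← Complex.ofReal_pow, Real.sq_sqrt hN]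
  have f₀ : returnAmplitude H v 0 = 1 := by simp [returnAmplitude]
  have f₁ : deriv (returnAmplitude H v) 0 = 0 := by
    simpa [hv] using iteratedDeriv_returnAmplitude_zero H v 1
  have f₂ : iteratedDeriv 2 (returnAmplitude H v) 0 = -(H ^ 2) v v := by
    simpa using iteratedDeriv_returnAmplitude_zero H v 2
  have f₄ : iteratedDeriv 4 (returnAmplitude H v) 0 = (H ^ 4) v v := by
    simpa [Even.neg_pow (by decide : Even 4)] using iteratedDeriv_returnAmplitude_zero H v 4
  have c₁ : deriv (fun z : ℂ => Complex.cos (Real.sqrt N * z)) 0 = 0 := by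
    simpa using iteratedDeriv_cos_mul_odd_zero (Real.sqrt N) 0
  have c₂ : iteratedDeriv 2 (fun z : ℂ => Complex.cos (Real.sqrt N * z)) 0 = -N := by
    simpa [ha] using iteratedDeriv_cos_mul_even_zero (Real.sqrt N) 1
  have c₄ : iteratedDeriv 4 (fun z : ℂ => Complex.cos (Real.sqrt N * z)) 0 = N ^ 2 := by
    simpa [ha] using iteratedDeriv_cos_mul_even_zero (Real.sqrt N) 2
  simp only [f₀, f₁, f₂, f₄, c₁, c₂, c₄, mul_zero, Complex.cos_zero] at hd₂ hd₄
  -- `hd₂ : -2 (H²)ᵥᵥ = -2 N` and `hd₄ : 2 (H⁴)ᵥᵥ + 6 ((H²)ᵥᵥ)² = 8 N²`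
  have h₂ : (H ^ 2) v v = N := by linear_combination (-1 / 2 : ℂ) * hd₂
  exact ⟨h₂, by linear_combination (1 / 2 : ℂ) * hd₄ - 3 * ((H ^ 2) v v + N) * h₂⟩

lemma IsSwift.sq_apply (hH : H.IsHermitian) (hv : H v v = 0) (hN : 0 ≤ N) (hs : IsSwift H v N)
    (x : V) : (H ^ 2) x v = if x = v then (N : ℂ) else 0 := by
  obtain ⟨h₂, h₄⟩ := hs.sq_apply_self_and_pow_four_apply_self hH hv hN
  split_ifs with hx
  · exact hx ▸ h₂
  · refine (hH.pow 2).apply_eq_zero_of_mul_self_apply_self h₂ ?_ hx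
    rw [← pow_add, h₄]

lemma pow_two_mul_apply_of_sq_apply (hcol : ∀ x, (H ^ 2) x v = if x = v then (N : ℂ) else 0)
    (k : ℕ) (x : V) :
    (H ^ (2 * k)) x v = if x = v then (N : ℂ) ^ k else 0 := by
  induction k with
  | zero => simp [one_apply, eq_comm]
  | succ k ih =>
    rw [mul_add, mul_one, pow_add, mul_apply, Finset.sum_eq_single v (fun y _ hy => by
      rw [hcol, if_neg hy, mul_zero]) (by simp), hcol, if_pos rfl, ih]
    split_ifs <;> ring

lemma pow_two_mul_add_one_apply_self_of_sq_apply (hv : H v v = 0)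
    (hcol : ∀ x, (H ^ 2) x v = if x = v then (N : ℂ) else 0) (k : ℕ) :
    (H ^ (2 * k + 1)) v v = 0 := by
  rw [pow_succ', mul_apply, Finset.sum_eq_single v (fun y _ hy => by
    rw [pow_two_mul_apply_of_sq_apply hcol, if_neg hy, mul_zero]) (by simp), hv, zero_mul]

lemma returnAmplitude_eq_cos (hv : H v v = 0) (hN : 0 ≤ N)
    (hcol : ∀ x, (H ^ 2) x v = if x = v then (N : ℂ) else 0) :
    returnAmplitude H v = fun z => Complex.cos (Real.sqrt N * z) := by
  refine (differentiable_returnAmplitude H v).eq_of_iteratedDeriv_zero_eq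
    (Complex.differentiable_cos.comp (differentiable_id.const_mul _)) fun n => ?_
  have ha : ((Real.sqrt N : ℝ) : ℂ) ^ 2 = N := by rw [← Complex.ofReal_pow, Real.sq_sqrt hN]
  rw [iteratedDeriv_returnAmplitude_zero]
  obtain ⟨k, rfl | rfl⟩ := Nat.even_or_odd' n
  · rw [iteratedDeriv_cos_mul_even_zero, pow_two_mul_apply_of_sq_apply hcol, if_pos rfl, pow_mul,
      ha, neg_pow, Complex.I_sq, ← mul_pow]
    ring
  · rw [iteratedDeriv_cos_mul_odd_zero, pow_two_mul_add_one_apply_self_of_sq_apply hv hcol,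
      mul_zero]

lemma isSwift_of_sq_apply (hv : H v v = 0) (hN : 0 ≤ N)
    (hcol : ∀ x, (H ^ 2) x v = if x = v then (N : ℂ) else 0) : IsSwift H v N := by
  intro t _
  rw [← returnAmplitude_ofReal, congrFun (returnAmplitude_eq_cos hv hN hcol),
    ← Complex.ofReal_mul, ← Complex.ofReal_cos, Complex.norm_real, Real.norm_eq_abs, sq_abs]

end

lemma IsChiralAdjacency.apply_self {V : Type*} {G : SimpleGraph V} {H : Matrix V V ℂ}
    (hC : IsChiralAdjacency G H) (v : V) : H v v = 0 :=
  hC.2.2 v v (G.loopless.irrefl v)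

section
variable {V₁ V₂ : Type*}

def apexJoin (H₁ : Matrix (Option V₁) (Option V₁) ℂ)
    (H₂ : Matrix (Option V₂) (Option V₂) ℂ) :
    Matrix (Option (V₁ ⊕ V₂)) (Option (V₁ ⊕ V₂)) ℂ
  | none, none => 0
  | none, some (.inl a) => H₁ none (some a)
  | none, some (.inr a) => H₂ none (some a)
  | some (.inl a), none => H₁ (some a) none
  | some (.inr a), none => H₂ (some a) none
  | some (.inl a), some (.inl b) => H₁ (some a) (some b)
  | some (.inr a), some (.inr b) => H₂ (some a) (some b)
  | some (.inl _), some (.inr _) => 0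
  | some (.inr _), some (.inl _) => 0

variable {H₁ : Matrix (Option V₁) (Option V₁) ℂ}
  {H₂ : Matrix (Option V₂) (Option V₂) ℂ}

lemma isHermitian_apexJoin (h₁ : H₁.IsHermitian) (h₂ : H₂.IsHermitian) :
    (apexJoin H₁ H₂).IsHermitian := by
  ext (_ | a | a) (_ | b | b) <;> simp only [conjTranspose_apply, apexJoin, star_zero] <;>
    first | rfl | exact h₁.apply _ _ | exact h₂.apply _ _

lemma isChiralAdjacency_apexJoin {G₁ : SimpleGraph V₁} {G₂ : SimpleGraph V₂}
    (hC₁ : IsChiralAdjacency (coneGraph G₁) H₁)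
    (hC₂ : IsChiralAdjacency (coneGraph G₂) H₂) :
    IsChiralAdjacency (coneGraph (G₁ ⊕g G₂)) (apexJoin H₁ H₂) := by
  refine ⟨isHermitian_apexJoin hC₁.1 hC₂.1, ?_, ?_⟩
  · rintro (_ | a | a) (_ | b | b) hadj
    all_goals first
      | exact hC₁.2.1 _ _ hadj | exact hC₂.2.1 _ _ hadj
      | exact hC₁.2.1 _ _ trivial | exact hC₂.2.1 _ _ trivial
      | simp [coneGraph] at hadj
  · rintro (_ | a | a) (_ | b | b) hadj
    all_goals first
      | rfl | exact hC₁.2.2 _ _ hadj | exact hC₂.2.2 _ _ hadj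

variable [Fintype V₁] [Fintype V₂] [DecidableEq V₁] [DecidableEq V₂]

lemma apexJoin_sq_apply_none_none (h₁ : H₁ none none = 0) (h₂ : H₂ none none = 0) :
    (apexJoin H₁ H₂ ^ 2) none none = (H₁ ^ 2) none none + (H₂ ^ 2) none none := by
  simp [sq, mul_apply, Fintype.sum_option, Fintype.sum_sum_type, apexJoin, h₁, h₂]

lemma apexJoin_sq_apply_inl_none (h₁ : H₁ none none = 0) (a : V₁) :
    (apexJoin H₁ H₂ ^ 2) (some (.inl a)) none = (H₁ ^ 2) (some a) none := by
  simp [sq, mul_apply, Fintype.sum_option, Fintype.sum_sum_type, apexJoin, h₁]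

lemma apexJoin_sq_apply_inr_none (h₂ : H₂ none none = 0) (a : V₂) :
    (apexJoin H₁ H₂ ^ 2) (some (.inr a)) none = (H₂ ^ 2) (some a) none := by
  simp [sq, mul_apply, Fintype.sum_option, Fintype.sum_sum_type, apexJoin, h₂]

end

/-- If the cones over `G₁` (on `N₁` vertices) and over `G₂` (on `N₂` vertices) each admit
a swift chiral quantum walk from their apex, then so does the cone over the disjoint
union `G₁ ⊔ G₂`, with return probability `cos²(√(N₁+N₂)·t)` at the apex. -/
theorem swift_stmt_14 {N₁ N₂ : ℕ}
    (G₁ : SimpleGraph (Fin N₁)) (G₂ : SimpleGraph (Fin N₂))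
    (h₁ : ∃ H₁ : Matrix (Option (Fin N₁)) (Option (Fin N₁)) ℂ,
      IsChiralAdjacency (coneGraph G₁) H₁ ∧ ∀ t : ℝ, 0 ≤ t →
        ‖(NormedSpace.exp ((-(t : ℂ) * Complex.I) • H₁)) none none‖ ^ 2 =
          Real.cos (Real.sqrt N₁ * t) ^ 2)
    (h₂ : ∃ H₂ : Matrix (Option (Fin N₂)) (Option (Fin N₂)) ℂ,
      IsChiralAdjacency (coneGraph G₂) H₂ ∧ ∀ t : ℝ, 0 ≤ t →
        ‖(NormedSpace.exp ((-(t : ℂ) * Complex.I) • H₂)) none none‖ ^ 2 =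
          Real.cos (Real.sqrt N₂ * t) ^ 2) :
    ∃ H : Matrix (Option (Fin N₁ ⊕ Fin N₂)) (Option (Fin N₁ ⊕ Fin N₂)) ℂ,
      IsChiralAdjacency (coneGraph (G₁ ⊕g G₂)) H ∧ ∀ t : ℝ, 0 ≤ t →
        ‖(NormedSpace.exp ((-(t : ℂ) * Complex.I) • H)) none none‖ ^ 2 =
          Real.cos (Real.sqrt (N₁ + N₂) * t) ^ 2 := by
  obtain ⟨H₁, hC₁, hs₁⟩ := h₁
  obtain ⟨H₂, hC₂, hs₂⟩ := h₂
  have hv₁ := hC₁.apply_self none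
  have hv₂ := hC₂.apply_self none
  have hcol₁ := IsSwift.sq_apply hC₁.1 hv₁ (Nat.cast_nonneg _) hs₁
  have hcol₂ := IsSwift.sq_apply hC₂.1 hv₂ (Nat.cast_nonneg _) hs₂
  refine ⟨apexJoin H₁ H₂, isChiralAdjacency_apexJoin hC₁ hC₂,
    isSwift_of_sq_apply rfl (by positivity) ?_⟩
  rintro (_ | a | a)
  · simp [apexJoin_sq_apply_none_none hv₁ hv₂, hcol₁, hcol₂]
  · simp [apexJoin_sq_apply_inl_none hv₁, hcol₁]
  · simp [apexJoin_sq_apply_inr_none hv₂, hcol₂]
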